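/- arXiv:2012.02623 — 4 statements merged into one kernel-verified Lean document; each statement's English description precedes it below -/
import Mathlib

section
/- For integers 1 ≤ m ≤ n, the number of classical (m,n)-parking functions is (n-m+1)(n+1)^{m-1}. -/
/-- The first unoccupied spot `s` with `p ≤ s ≤ n`, if any. -/
def forwardSpot (n : ℕ) (occ : Finset ℕ) (p : ℕ) : Option ℕ :=
  (List.range' p (n + 1 - p)).find? (fun s => decide (s ∉ occ))

/-- Classical (forward-only) parking process: cars park one by one, each at the
first free spot `≥` its preference; returns the final occupied set if all park. -/
def classicalPark (n : ℕ) : List ℕ → Finset ℕ → Option (Finset ℕ)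
  | [], occ => some occ
  | p :: rest, occ =>
    match forwardSpot n occ p with
    | none => none
    | some s => classicalPark n rest (insert s occ)

/-- Backward candidates `p-1, p-2, …, p-k` that are at least `1`. -/
def backwardCandidates (k p : ℕ) : List ℕ :=
  ((List.range k).map (fun i => p - (i + 1))).filter (fun s => decide (1 ≤ s))

/-- The spot where a car with preference `p` parks under the `k`-Naples rule. -/
def naplesSpot (n k : ℕ) (occ : Finset ℕ) (p : ℕ) : Option ℕ :=
  if p ∈ occ then
    match (backwardCandidates k p).find? (fun s => decide (s ∉ occ)) with
    | some s => some s
    | none => forwardSpot n occ p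
  else some p

/-- `k`-Naples parking process; returns the final occupied set if all cars park. -/
def naplesPark (n k : ℕ) : List ℕ → Finset ℕ → Option (Finset ℕ)
  | [], occ => some occ
  | p :: rest, occ =>
    match naplesSpot n k occ p with
    | none => none
    | some s => naplesPark n k rest (insert s occ)

/-- All cars park under the `k`-Naples rule and no car with preference `p ≤ k`
finds all of `1, …, p` occupied (no car exits the lot searching backward). -/
def naplesContainedAux (n k : ℕ) : List ℕ → Finset ℕ → Bool
  | [], _ => true
  | p :: rest, occ =>
    (decide (p ≤ k → ¬ Finset.Icc 1 p ⊆ occ)) &&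
    match naplesSpot n k occ p with
    | none => false
    | some s => naplesContainedAux n k rest (insert s occ)

/-- The (1-based) preference list of `a : Fin m → Fin n`. -/
def prefList {m n : ℕ} (a : Fin m → Fin n) : List ℕ :=
  (List.ofFn a).map (fun x => (x : ℕ) + 1)

/-- The set of classical `(m,n)`-parking functions. -/
def PFset (m n : ℕ) : Finset (Fin m → Fin n) :=
  Finset.univ.filter (fun a => (classicalPark n (prefList a) ∅).isSome)

/-- The set of `k`-Naples `(m,n)`-parking functions. -/
def NPFset (m n k : ℕ) : Finset (Fin m → Fin n) :=
  Finset.univ.filter (fun a => (naplesPark n k (prefList a) ∅).isSome)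

/-- The set of contained `k`-Naples `(m,n)`-parking functions. -/
def Bset (m n k : ℕ) : Finset (Fin m → Fin n) :=
  Finset.univ.filter (fun a => naplesContainedAux n k (prefList a) ∅)

/-- The set of `k`-left obstructed `(m,n)`-parking functions: `m` cars on
`n + k` spots whose first `k` spots are obstructed, forward-only rule. -/
def LPFset (m n k : ℕ) : Finset (Fin m → Fin (n + k)) :=
  Finset.univ.filter (fun a => (classicalPark (n + k) (prefList a) (Finset.Icc 1 k)).isSome)

/-! Pollak's circular argument. Add a spot `0` and let the `n + 1` spots form a circle, cars
searching forward cyclically; then every sequence in `Fin (n + 1)` parks `m` cars, leaving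
`n + 1 - m` spots empty. Rotating all preferences rotates the outcome, so each spot is left
empty by the same number of sequences, namely `(n + 1 - m) (n + 1) ^ (m - 1)`. The sequences
leaving `0` empty never prefer `0`, and are exactly the shifted classical parking functions: a
linear search that runs past `n` is precisely a circular search that ends at `0`. -/

namespace CircularParking

open Finset Fin.NatCast Fin.CommRing

variable {n : ℕ}

def circList (n : ℕ) (p : Fin (n + 1)) : List (Fin (n + 1)) :=
  (List.range (n + 1)).map (fun i : ℕ => p + (i : Fin (n + 1)))

-- The default `p` is never used: some spot is free whenever a car arrives.
def circSpot (n : ℕ) (occ : Finset (Fin (n + 1))) (p : Fin (n + 1)) : Fin (n + 1) :=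
  ((circList n p).find? (· ∉ occ)).getD p

def circPark (n : ℕ) : List (Fin (n + 1)) → Finset (Fin (n + 1)) → Finset (Fin (n + 1))
  | [], occ => occ
  | p :: rest, occ => circPark n rest (insert (circSpot n occ p) occ)

lemma mem_circList (p z : Fin (n + 1)) : z ∈ circList n p :=
  List.mem_map.2 ⟨(z - p).val, List.mem_range.2 (z - p).isLt, by simp⟩

lemma circSpot_notMem {occ : Finset (Fin (n + 1))} {z : Fin (n + 1)} (hz : z ∉ occ)
    (p : Fin (n + 1)) : circSpot n occ p ∉ occ := by
  obtain ⟨s, hs⟩ : ∃ s, (circList n p).find? (· ∉ occ) = some s :=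
    Option.isSome_iff_exists.1 <| List.find?_isSome.2 ⟨z, mem_circList p z, by simpa using hz⟩
  rw [circSpot, hs, Option.getD_some]
  simpa using List.find?_some hs

lemma circSpot_of_notMem {occ : Finset (Fin (n + 1))} {p : Fin (n + 1)} (h : p ∉ occ) :
    circSpot n occ p = p := by
  rw [circSpot, circList, List.range_succ_eq_map, List.map_cons,
    List.find?_cons_of_pos (by simpa using h)]
  simp

lemma subset_circPark : ∀ (l : List (Fin (n + 1))) (occ : Finset (Fin (n + 1))),
    occ ⊆ circPark n l occ
  | [], _ => subset_rfl
  | _ :: rest, _ => (subset_insert _ _).trans (subset_circPark rest _)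

lemma mem_circPark_of_mem : ∀ {l : List (Fin (n + 1))} {p : Fin (n + 1)}
    (occ : Finset (Fin (n + 1))), p ∈ l → p ∈ circPark n l occ
  | _ :: rest, p, occ, hp => by
    rw [circPark]
    rcases List.mem_cons.1 hp with rfl | hp
    · apply subset_circPark
      by_cases hocc : p ∈ occ
      · exact mem_insert_of_mem hocc
      · rw [circSpot_of_notMem hocc]
        exact mem_insert_self _ _
    · exact mem_circPark_of_mem _ hp

lemma card_circPark : ∀ (l : List (Fin (n + 1))) (occ : Finset (Fin (n + 1))),
    #occ + l.length ≤ n + 1 → #(circPark n l occ) = #occ + l.length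
  | [], _, _ => rfl
  | p :: rest, occ, h => by
    rw [List.length_cons] at h ⊢
    obtain ⟨z, -, hz⟩ := exists_mem_notMem_of_card_lt_card (s := occ) (t := univ)
      (by rw [card_univ, Fintype.card_fin]; omega)
    have hcard := card_insert_of_notMem (circSpot_notMem hz p)
    rw [circPark, card_circPark rest _ (by omega), hcard]
    omega

lemma circSpot_add (occ : Finset (Fin (n + 1))) (p r : Fin (n + 1)) :
    circSpot n (occ.image (· + r)) (p + r) = circSpot n occ p + r := by
  have hlist : circList n (p + r) = (circList n p).map (· + r) := by
    simp only [circList, List.map_map]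
    exact List.map_congr_left fun i _ => by simp only [Function.comp]; ring
  have hpred :
      ((· ∉ occ.image (· + r)) ∘ (· + r) : Fin (n + 1) → Bool) = (· ∉ occ) := by
    funext x
    simp
  rw [circSpot, hlist, List.find?_map, hpred, circSpot]
  cases (circList n p).find? (· ∉ occ) <;> rfl

lemma circPark_add (r : Fin (n + 1)) : ∀ (l : List (Fin (n + 1))) (occ : Finset (Fin (n + 1))),
    circPark n (l.map (· + r)) (occ.image (· + r)) = (circPark n l occ).image (· + r)
  | [], _ => rfl
  | p :: rest, occ => by
    rw [List.map_cons, circPark, circPark, circSpot_add, ← circPark_add r rest, image_insert]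

def circOcc {m : ℕ} (b : Fin m → Fin (n + 1)) : Finset (Fin (n + 1)) :=
  circPark n (List.ofFn b) ∅

lemma card_circOcc {m : ℕ} (h : m ≤ n + 1) (b : Fin m → Fin (n + 1)) : #(circOcc b) = m := by
  rw [circOcc]
  simpa using card_circPark (List.ofFn b) ∅ (by simpa using h)

lemma circOcc_add_const {m : ℕ} (b : Fin m → Fin (n + 1)) (r : Fin (n + 1)) :
    circOcc (b + Function.const _ r) = (circOcc b).image (· + r) := by
  rw [circOcc, circOcc, ← image_empty (· + r), ← circPark_add, List.map_ofFn]
  rfl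

def leavesEmpty (m n : ℕ) (r : Fin (n + 1)) : Finset (Fin m → Fin (n + 1)) :=
  univ.filter (r ∉ circOcc ·)

lemma card_leavesEmpty (m : ℕ) (r : Fin (n + 1)) :
    #(leavesEmpty m n r) = #(leavesEmpty m n 0) := by
  symm
  refine card_equiv (Equiv.addRight (Function.const _ r)) fun b => ?_
  simp only [leavesEmpty, mem_filter, mem_univ, true_and, Equiv.coe_addRight, circOcc_add_const]
  constructor
  · intro hb hr
    obtain ⟨x, hx, hxr⟩ := mem_image.1 hr
    rw [add_eq_right.1 hxr] at hx
    exact hb hx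
  · exact fun hb h0 => hb (mem_image.2 ⟨0, h0, zero_add r⟩)

lemma card_mul_card_leavesEmpty_zero {m : ℕ} (h : m ≤ n + 1) :
    (n + 1) * #(leavesEmpty m n 0) = (n + 1 - m) * (n + 1) ^ m := by
  calc (n + 1) * #(leavesEmpty m n 0)
      = ∑ r : Fin (n + 1), #(leavesEmpty m n r) := by simp [card_leavesEmpty]
    _ = ∑ b : Fin m → Fin (n + 1), #(univ.filter (· ∉ circOcc b)) :=
        sum_card_bipartiteAbove_eq_sum_card_bipartiteBelow (fun r b => r ∉ circOcc b)
    _ = (n + 1 - m) * (n + 1) ^ m := by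
        simp [filter_notMem_eq_sdiff, card_univ_sdiff, card_circOcc h, mul_comm]

lemma natCast_mem_image_natCast_iff {occ : Finset ℕ} (hocc : occ ⊆ Icc 1 n) {t : ℕ}
    (ht : t ≤ n) : (t : Fin (n + 1)) ∈ occ.image (↑) ↔ t ∈ occ := by
  refine ⟨fun h => ?_, mem_image_of_mem _⟩
  obtain ⟨y, hy, hyt⟩ := mem_image.1 h
  have hyn := (mem_Icc.1 (hocc hy)).2
  have hval := congrArg Fin.val hyt
  rw [Fin.val_cast_of_lt (by omega), Fin.val_cast_of_lt (by omega)] at hval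
  rwa [← hval]

lemma zero_notMem_image_natCast {occ : Finset ℕ} (hocc : occ ⊆ Icc 1 n) :
    (0 : Fin (n + 1)) ∉ occ.image (↑) := by
  intro h
  simpa using hocc ((natCast_mem_image_natCast_iff hocc (Nat.zero_le n)).1 (by simpa using h))

lemma forwardSpot_mem_Icc {occ : Finset ℕ} {p s : ℕ} (h : forwardSpot n occ p = some s) :
    s ∈ Icc p n := by
  have := List.mem_range'_1.1 (List.mem_of_find?_eq_some h)
  rw [mem_Icc]
  omega

lemma circList_natCast {p : ℕ} (hp : p ≤ n) :
    circList n p = (List.range' p (n + 1 - p) ++ List.range' (n + 1) p).map (↑) := by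
  have hsplit : List.range' p (n + 1 - p) ++ List.range' (n + 1) p = List.range' p (n + 1) := by
    simpa [show p + (n + 1 - p) = n + 1 by omega, show n + 1 - p + p = n + 1 by omega] using
      List.range'_append (s := p) (m := n + 1 - p) (n := p) (step := 1)
  rw [hsplit, List.range'_eq_map_range, List.map_map, circList]
  exact List.map_congr_left fun i _ => by simp

-- Spot `s ∈ [1, n]` of the street is `(s : Fin (n + 1))`, and the extra spot is `0`.
lemma circSpot_natCast {occ : Finset ℕ} (hocc : occ ⊆ Icc 1 n) {p : ℕ} (hp : p ∈ Icc 1 n) :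
    circSpot n (occ.image (↑)) p = ((forwardSpot n occ p).map (↑)).getD 0 := by
  obtain ⟨hp1, hpn⟩ := mem_Icc.1 hp
  obtain ⟨q, rfl⟩ : ∃ q, p = q + 1 := ⟨p - 1, by omega⟩
  have hforward : (List.range' (q + 1) (n + 1 - (q + 1))).find?
      ((· ∉ occ.image (↑)) ∘ ((↑) : ℕ → Fin (n + 1))) = forwardSpot n occ (q + 1) := by
    refine List.find?_congr fun t ht => ?_
    have htn := (List.mem_range'_1.1 ht).2
    exact decide_eq_decide.2 (not_congr (natCast_mem_image_natCast_iff hocc (by omega)))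
  have hwrap : (List.range' (n + 1) (q + 1)).find?
      ((· ∉ occ.image (↑)) ∘ ((↑) : ℕ → Fin (n + 1))) = some (n + 1) :=
    List.find?_cons_of_pos (by simpa using zero_notMem_image_natCast hocc)
  rw [circSpot, circList_natCast hpn, List.find?_map, List.find?_append, hforward, hwrap]
  cases forwardSpot n occ (q + 1) <;> simp

lemma classicalPark_isSome_iff : ∀ (l : List ℕ) (occ : Finset ℕ), (∀ p ∈ l, p ∈ Icc 1 n) →
    occ ⊆ Icc 1 n →
    ((classicalPark n l occ).isSome ↔
      (0 : Fin (n + 1)) ∉ circPark n (l.map (↑)) (occ.image (↑)))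
  | [], occ, _, hocc => by
    simpa [classicalPark, circPark] using zero_notMem_image_natCast hocc
  | p :: rest, occ, hl, hocc => by
    have hp := hl p List.mem_cons_self
    have hspot := circSpot_natCast hocc hp
    rw [List.map_cons, circPark, hspot, classicalPark]
    cases hs : forwardSpot n occ p with
    | none =>
      simpa using subset_circPark _ _ (mem_insert_self _ _)
    | some s =>
      have hs1 := (mem_Icc.1 hp).1
      have hsn := mem_Icc.1 (forwardSpot_mem_Icc hs)
      rw [Option.map_some, Option.getD_some, ← image_insert]
      exact classicalPark_isSome_iff rest _ (fun x hx => hl x (List.mem_cons_of_mem _ hx))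
        (insert_subset (mem_Icc.2 ⟨by omega, hsn.2⟩) hocc)

end CircularParking

open Finset Fin.NatCast CircularParking

-- `prefList` coerces `List.ofFn a` to `List ℕ` through the list monad.
lemma prefList_eq_ofFn {m n : ℕ} (a : Fin m → Fin n) :
    prefList a = List.ofFn (fun i => (a i : ℕ) + 1) := by
  simp only [prefList, List.pure_def, List.bind_eq_flatMap, ← List.map_eq_flatMap, List.map_ofFn]
  rfl

lemma prefList_map_natCast {m n : ℕ} (a : Fin m → Fin n) :
    (prefList a).map ((↑) : ℕ → Fin (n + 1)) = List.ofFn (Fin.succ ∘ a) := by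
  rw [prefList_eq_ofFn, List.map_ofFn]
  congr 1
  funext i
  ext
  simp

lemma mem_PFset_iff {m n : ℕ} (a : Fin m → Fin n) :
    a ∈ PFset m n ↔ (0 : Fin (n + 1)) ∉ circOcc (Fin.succ ∘ a) := by
  have hprefs : ∀ p ∈ prefList a, p ∈ Icc 1 n := by
    simp only [prefList_eq_ofFn, List.mem_ofFn, mem_Icc]
    rintro _ ⟨i, rfl⟩
    exact ⟨Nat.le_add_left 1 _, (a i).isLt⟩
  rw [PFset, mem_filter, classicalPark_isSome_iff _ _ hprefs (empty_subset _),
    prefList_map_natCast, image_empty, circOcc, and_iff_right (mem_univ a)]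

lemma card_PFset {m n : ℕ} : #(PFset m n) = #(leavesEmpty m n 0) := by
  refine card_bij (fun a _ => Fin.succ ∘ a) (fun a ha => ?_) (fun a _ c _ h => ?_) fun b hb => ?_
  · simpa [leavesEmpty] using (mem_PFset_iff a).1 ha
  · exact funext fun i => Fin.succ_injective n (congrFun h i)
  · have hb0 : ∀ i, b i ≠ 0 := fun i hi =>
      (mem_filter.1 hb).2 (mem_circPark_of_mem _ (List.mem_ofFn.2 ⟨i, hi⟩))
    have hsucc : Fin.succ ∘ (fun i => (b i).pred (hb0 i)) = b := funext fun i => Fin.succ_pred _ _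
    refine ⟨fun i => (b i).pred (hb0 i), ?_, hsucc⟩
    rw [mem_PFset_iff, hsucc]
    exact (mem_filter.1 hb).2

theorem pf_count (m n : ℕ) (hm : 1 ≤ m) (hmn : m ≤ n) :
    (PFset m n).card = (n - m + 1) * (n + 1) ^ (m - 1) := by
  obtain ⟨k, rfl⟩ : ∃ k, m = k + 1 := ⟨m - 1, by omega⟩
  rw [card_PFset]
  apply Nat.eq_of_mul_eq_mul_left (by omega : 0 < n + 1)
  rw [card_mul_card_leavesEmpty_zero (by omega), show n + 1 - (k + 1) = n - (k + 1) + 1 by omega,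
    Nat.add_sub_cancel, pow_succ']
  ring
end

section
/- For 1 ≤ m ≤ n and 0 ≤ k ≤ n-1, every classical (m,n)-parking function is a k-Naples (m,n)-parking function; that is, PF(m,n) ⊆ PF(m,n;k). -/
/-!
Run the classical and the `k`-Naples process side by side on the same preferences. The
invariant is that the Naples occupied set lies to the left of the classical one: for every
threshold `t`, it has at most as many spots `≥ t`. A Naples car parking at or left of its
preference keeps this. When it must search forward, the invariant leaves a free spot in
`[p, n]` (the classical car found one), and all spots it passes beyond the classical car's
spot are occupied, which again preserves the invariant.
-/

open Finset

def tailCount (S : Finset ℕ) (t : ℕ) : ℕ := #{x ∈ S | t ≤ x}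

def TailLE (A B : Finset ℕ) : Prop := ∀ t, tailCount A t ≤ tailCount B t

lemma tailCount_insert {S : Finset ℕ} {a : ℕ} (ha : a ∉ S) (t : ℕ) :
    tailCount (insert a S) t = tailCount S t + if t ≤ a then 1 else 0 := by
  unfold tailCount
  rw [filter_insert]
  split_ifs with ht
  · rw [card_insert_of_notMem (by simp [ha])]
  · rfl

lemma tailCount_eq_add_card_inter_Ico (S : Finset ℕ) {s t : ℕ} (hst : s ≤ t) :
    tailCount S s = tailCount S t + #(S ∩ Ico s t) := by
  unfold tailCount
  rw [← card_union_of_disjoint]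
  · congr 1
    ext x
    by_cases hx : x ∈ S
    · simp only [mem_filter, mem_union, mem_inter, mem_Ico, hx, true_and]
      omega
    · simp [hx]
  · rw [disjoint_left]
    intro x hx hx'
    simp only [mem_filter, mem_inter, mem_Ico] at hx hx'
    omega

lemma card_inter_Ico_of_subset {S : Finset ℕ} {s t : ℕ} (h : Ico s t ⊆ S) :
    #(S ∩ Ico s t) = t - s := by
  rw [inter_eq_right.mpr h, Nat.card_Ico]

lemma card_inter_Ico_lt {S : Finset ℕ} {s t x : ℕ} (hx : x ∈ Ico s t) (hxS : x ∉ S) :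
    #(S ∩ Ico s t) < t - s := by
  rw [← Nat.card_Ico]
  exact card_lt_card ⟨inter_subset_right, fun h => hxS (mem_of_mem_inter_left (h hx))⟩

lemma TailLE.insert {A B : Finset ℕ} {a b : ℕ} (hAB : TailLE A B) (ha : a ∉ A) (hb : b ∉ B)
    (hfull : ∀ x, b ≤ x → x < a → x ∈ A) : TailLE (insert a A) (insert b B) := by
  intro t
  have ht := hAB t
  rw [tailCount_insert ha, tailCount_insert hb]
  split_ifs with hta htb
  · omega
  · have hbt : b < t := by omega
    have hA := tailCount_eq_add_card_inter_Ico A hbt.le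
    have hB := tailCount_eq_add_card_inter_Ico B hbt.le
    have hAfull := card_inter_Ico_of_subset (S := A) (s := b) (t := t) fun x hx =>
      hfull x (mem_Ico.mp hx).1 (by have := (mem_Ico.mp hx).2; omega)
    have hBfree := card_inter_Ico_lt (S := B) (t := t) (mem_Ico.mpr ⟨le_rfl, hbt⟩) hb
    have := hAB b
    omega
  · omega
  · omega

lemma forwardSpot_spec {n p s : ℕ} {occ : Finset ℕ} (h : forwardSpot n occ p = some s) :
    p ≤ s ∧ s ≤ n ∧ s ∉ occ ∧ ∀ x, p ≤ x → x < s → x ∈ occ := by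
  obtain ⟨hs, hmem, hbefore⟩ := List.find?_range'_eq_some.mp h
  rw [List.mem_range'_1] at hmem
  refine ⟨hmem.1, by omega, by simpa using hs, fun x hpx hxs => ?_⟩
  simpa using hbefore x hpx hxs

lemma Ico_subset_of_forwardSpot_eq_none {n p : ℕ} {occ : Finset ℕ}
    (h : forwardSpot n occ p = none) : Ico p (n + 1) ⊆ occ := by
  intro x hx
  rw [mem_Ico] at hx
  simpa using List.find?_range'_eq_none.mp h x hx.1 (by omega)

lemma backwardCandidates_spec {k p s : ℕ} (h : s ∈ backwardCandidates k p) : s < p := by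
  simp only [backwardCandidates, List.mem_filter, List.mem_map, List.mem_range,
    decide_eq_true_eq] at h
  obtain ⟨⟨i, -, rfl⟩, hs⟩ := h
  omega

lemma forwardSpot_isSome_of_tailLE {n p s : ℕ} {A B : Finset ℕ} (hAB : TailLE A B)
    (hB : ∀ x ∈ B, x ≤ n) (hs : forwardSpot n B p = some s) : (forwardSpot n A p).isSome := by
  obtain ⟨hps, hsn, hsB, -⟩ := forwardSpot_spec hs
  rw [Option.isSome_iff_ne_none]
  intro hnone
  have hpn : p ≤ n + 1 := by omega
  have hA := tailCount_eq_add_card_inter_Ico A hpn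
  have hB_split := tailCount_eq_add_card_inter_Ico B hpn
  have hAfull := card_inter_Ico_of_subset (Ico_subset_of_forwardSpot_eq_none hnone)
  have hBfree := card_inter_Ico_lt (s := p) (t := n + 1) (mem_Ico.mpr ⟨hps, by omega⟩) hsB
  have hBtail : tailCount B (n + 1) = 0 := by
    simp only [tailCount, card_eq_zero, filter_eq_empty_iff]
    exact fun x hx => by have := hB x hx; omega
  have := hAB p
  omega

lemma exists_naplesSpot_of_forwardSpot {n k p s : ℕ} {A B : Finset ℕ} (hAB : TailLE A B)
    (hB : ∀ x ∈ B, x ≤ n) (hs : forwardSpot n B p = some s) :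
    ∃ a, naplesSpot n k A p = some a ∧ a ∉ A ∧ ∀ x, s ≤ x → x < a → x ∈ A := by
  obtain ⟨hps, -, -, -⟩ := forwardSpot_spec hs
  by_cases hp : p ∈ A
  · cases hback : (backwardCandidates k p).find? (fun x => decide (x ∉ A)) with
    | some a =>
      have haA : a ∉ A := by simpa using List.find?_some hback
      have hap := backwardCandidates_spec (List.mem_of_find?_eq_some hback)
      exact ⟨a, by rw [naplesSpot, if_pos hp, hback], haA, fun x hsx hxa => by omega⟩
    | none =>
      obtain ⟨a, ha⟩ := Option.isSome_iff_exists.mp (forwardSpot_isSome_of_tailLE hAB hB hs)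
      obtain ⟨-, -, haA, hbefore⟩ := forwardSpot_spec ha
      exact ⟨a, by rw [naplesSpot, if_pos hp, hback, ha], haA,
        fun x hsx hxa => hbefore x (hps.trans hsx) hxa⟩
  · exact ⟨p, by simp [naplesSpot, hp], hp, fun x hsx hxp => by omega⟩

lemma naplesPark_isSome_of_classicalPark_isSome (n k : ℕ) (ps : List ℕ) :
    ∀ A B : Finset ℕ, TailLE A B → (∀ x ∈ B, x ≤ n) →
      (classicalPark n ps B).isSome → (naplesPark n k ps A).isSome := by
  induction ps with
  | nil => simp [naplesPark]
  | cons p rest ih =>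
    intro A B hAB hB hC
    cases hs : forwardSpot n B p with
    | none => simp [classicalPark, hs] at hC
    | some s =>
      obtain ⟨-, hsn, hsB, -⟩ := forwardSpot_spec hs
      obtain ⟨a, ha, haA, hfull⟩ := exists_naplesSpot_of_forwardSpot (k := k) hAB hB hs
      simp only [classicalPark, hs] at hC
      simp only [naplesPark, ha]
      refine ih _ _ (hAB.insert haA hsB hfull) (fun x hx => ?_) hC
      rcases mem_insert.mp hx with rfl | hx
      exacts [hsn, hB x hx]

theorem pf_subset_naples_general (m n k : ℕ) :
    PFset m n ⊆ NPFset m n k := by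
  intro a ha
  simp only [PFset, NPFset, mem_filter, mem_univ, true_and] at ha ⊢
  exact naplesPark_isSome_of_classicalPark_isSome n k _ ∅ ∅ (fun _ => le_rfl) (by simp) ha

theorem pf_subset_naples (m n k : ℕ) (hm : 1 ≤ m) (hmn : m ≤ n) (hk : k ≤ n - 1) :
    PFset m n ⊆ NPFset m n k :=
  pf_subset_naples_general m n k
end

section
/- For 1 ≤ m ≤ n and 0 ≤ k ≤ k' ≤ n-1, every k-Naples (m,n)-parking function is a k'-Naples (m,n)-parking function, i.e. PF(m,n;k) ⊆ PF(m,n;k'). -/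
/-! Run the `k`- and the `k'`-process side by side on the same preferences, with occupied
sets `B` and `A` respectively, and compare them through the tail counts
`suffixCard · j = #{t | j ≤ t}`. The invariant is `suffixCard A j ≤ suffixCard B j` for all `j`:
the `k'`-cars sit further left. Let the next car, with preference `p`, park at `s` under `k` and
at `s'` under `k'`. If `s' ≤ s` the invariant clearly survives. If `s < s' ≤ p`, the `k`-car found
all of `(s, p]` occupied in `B`; if `p < s'`, the `k'`-car found all of `[s, s')` occupied in `A`
(its backward window reaches `s`, because `p - k' ≤ p - k ≤ s`). Either way the inequality is
strict on `(s, s']`, which is what inserting `s` into `B` and `s'` into `A` requires. The same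
counting shows that the `k'`-car cannot fail: otherwise `A` would fill `[s, n]` while `B`
misses `s`. -/

open Finset

section Spots

variable {n k p s : ℕ} {A : Finset ℕ}

theorem forwardSpot_eq_some (h : forwardSpot n A p = some s) :
    s ∉ A ∧ p ≤ s ∧ s ≤ n ∧ ∀ t, p ≤ t → t < s → t ∈ A := by
  simp only [forwardSpot, List.find?_range'_eq_some, List.mem_range'_1, decide_eq_true_eq,
    Bool.not_eq_true', decide_eq_false_iff_not, not_not] at h
  exact ⟨h.1, h.2.1.1, by omega, h.2.2⟩

theorem forwardSpot_eq_none (h : forwardSpot n A p = none) :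
    ∀ t, p ≤ t → t ≤ n → t ∈ A := by
  simp only [forwardSpot, List.find?_range'_eq_none, Bool.not_eq_true', decide_eq_false_iff_not,
    not_not] at h
  exact fun t hpt htn => h t hpt (by omega)

theorem find?_backwardCandidates_eq_some
    (h : (backwardCandidates k p).find? (fun s => decide (s ∉ A)) = some s) :
    s ∉ A ∧ 1 ≤ s ∧ s < p ∧ p ≤ s + k ∧ ∀ t, s < t → t < p → t ∈ A := by
  simp only [backwardCandidates, List.find?_filter, List.find?_map, List.range_eq_range',
    Option.map_eq_some_iff, List.find?_range'_eq_some, List.mem_range'_1] at h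
  obtain ⟨i, ⟨hi, ⟨-, hik⟩, hlt⟩, rfl⟩ := h
  simp only [Function.comp, decide_eq_true_eq, Bool.not_eq_true', decide_eq_false_iff_not,
    not_and, not_not] at hi hlt
  refine ⟨hi.2, hi.1, by omega, by omega, fun t hst htp => ?_⟩
  simpa [show p - (p - t - 1 + 1) = t by omega]
    using hlt (p - t - 1) (by omega) (by omega) (by omega)

theorem find?_backwardCandidates_eq_none
    (h : (backwardCandidates k p).find? (fun s => decide (s ∉ A)) = none) :
    ∀ t, 1 ≤ t → t < p → p ≤ t + k → t ∈ A := by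
  simp only [backwardCandidates, List.find?_filter, List.find?_map, List.range_eq_range',
    Option.map_eq_none_iff, List.find?_range'_eq_none] at h
  intro t h1 htp htk
  simpa [show p - (p - t - 1 + 1) = t by omega, Nat.one_le_iff_ne_zero.mp h1]
    using h (p - t - 1) (by omega) (by omega)

theorem naplesSpot_eq_some (hp : 1 ≤ p) (hpn : p ≤ n) (h : naplesSpot n k A p = some s) :
    s ∉ A ∧ 1 ≤ s ∧ s ≤ n ∧ p ≤ s + k ∧ (s < p → Ioc s p ⊆ A) ∧
      (p < s → ∀ t, 1 ≤ t → p ≤ t + k → t < s → t ∈ A) := by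
  unfold naplesSpot at h
  by_cases hpA : p ∈ A
  · rw [if_pos hpA] at h
    cases hb : (backwardCandidates k p).find? (fun s => decide (s ∉ A)) with
    | some b =>
      rw [hb, Option.some_inj] at h
      subst h
      obtain ⟨hbA, hb1, hbp, hpb, hgap⟩ := find?_backwardCandidates_eq_some hb
      refine ⟨hbA, hb1, by omega, hpb, fun _ t ht => ?_, by omega⟩
      rw [mem_Ioc] at ht
      rcases ht.2.lt_or_eq with htp | rfl
      exacts [hgap t ht.1 htp, hpA]
    | none =>
      rw [hb] at h
      obtain ⟨hsA, hps, hsn, hgap⟩ := forwardSpot_eq_some h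
      have hback := find?_backwardCandidates_eq_none hb
      refine ⟨hsA, by omega, hsn, by omega, by omega, fun _ t ht1 htk hts => ?_⟩
      rcases lt_or_ge t p with htp | hpt
      exacts [hback t ht1 htp htk, hgap t hpt hts]
  · rw [if_neg hpA, Option.some_inj] at h
    subst h
    exact ⟨hpA, hp, hpn, by omega, by omega, by omega⟩

theorem naplesSpot_eq_none (h : naplesSpot n k A p = none) :
    ∀ t, 1 ≤ t → p ≤ t + k → t ≤ n → t ∈ A := by
  unfold naplesSpot at h
  by_cases hpA : p ∈ A
  · rw [if_pos hpA] at h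
    cases hb : (backwardCandidates k p).find? (fun s => decide (s ∉ A)) with
    | some b => rw [hb] at h; simp at h
    | none =>
      rw [hb] at h
      intro t ht1 htk htn
      rcases lt_or_ge t p with htp | hpt
      exacts [find?_backwardCandidates_eq_none hb t ht1 htp htk, forwardSpot_eq_none h t hpt htn]
  · simp [hpA] at h

end Spots

def suffixCard (A : Finset ℕ) (j : ℕ) : ℕ := #{t ∈ A | j ≤ t}

def SuffixCardLE (A B : Finset ℕ) : Prop := ∀ j, suffixCard A j ≤ suffixCard B j

section SuffixCard

variable {A B : Finset ℕ} {a b j s s' x : ℕ}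

theorem suffixCard_eq_card_inter_add (hab : a ≤ b) :
    suffixCard A a = #(A ∩ Ico a b) + suffixCard A b := by
  rw [suffixCard, suffixCard, ← card_union_of_disjoint]
  · congr 1
    ext t
    simp only [mem_filter, mem_union, mem_inter, mem_Ico]
    grind
  · rw [disjoint_left]
    intro t ht ht'
    simp only [mem_filter, mem_inter, mem_Ico] at ht ht'
    omega

theorem add_suffixCard_le_of_Ico_subset (hab : a ≤ b) (h : Ico a b ⊆ A) :
    b - a + suffixCard A b ≤ suffixCard A a := by
  rw [suffixCard_eq_card_inter_add hab, inter_eq_right.mpr h, Nat.card_Ico]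

theorem suffixCard_lt_of_notMem (hx : x ∉ A) (hax : a ≤ x) (hxb : x < b) :
    suffixCard A a < b - a + suffixCard A b := by
  rw [suffixCard_eq_card_inter_add (by omega : a ≤ b), ← Nat.card_Ico a b]
  gcongr
  exact ⟨inter_subset_right, fun h => hx (mem_of_mem_inter_left (h (mem_Ico.2 ⟨hax, hxb⟩)))⟩

theorem suffixCard_eq_zero (h : ∀ t ∈ A, t < j) : suffixCard A j = 0 := by
  simpa [suffixCard, filter_eq_empty_iff] using h

theorem suffixCard_insert (hx : x ∉ A) :
    suffixCard (insert x A) j = suffixCard A j + if j ≤ x then 1 else 0 := by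
  unfold suffixCard
  rw [filter_insert]
  split_ifs
  · rw [card_insert_of_notMem (by simp [hx])]
  · rfl

theorem SuffixCardLE.insert_insert (h : SuffixCardLE A B) (hs : s ∉ B) (hs' : s' ∉ A)
    (hlt : ∀ j, s < j → j ≤ s' → suffixCard A j < suffixCard B j) :
    SuffixCardLE (insert s' A) (insert s B) := by
  intro j
  rw [suffixCard_insert hs, suffixCard_insert hs']
  have := h j
  by_cases hj : s < j ∧ j ≤ s'
  · have := hlt j hj.1 hj.2
    split_ifs <;> omega
  · split_ifs <;> omega

theorem SuffixCardLE.insert_of_Ioc_subset (h : SuffixCardLE A B) (hs : s ∉ B) (hs' : s' ∉ A)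
    (hgap : Ioc s s' ⊆ B) : SuffixCardLE (insert s' A) (insert s B) := by
  refine h.insert_insert hs hs' fun j hsj hjs' => ?_
  have hsub : Ico j (s' + 1) ⊆ Ioc s s' := fun t => by simp only [mem_Ico, mem_Ioc]; omega
  calc suffixCard A j < s' + 1 - j + suffixCard A (s' + 1) :=
        suffixCard_lt_of_notMem hs' hjs' (Nat.lt_succ_self s')
    _ ≤ s' + 1 - j + suffixCard B (s' + 1) := Nat.add_le_add_left (h _) _
    _ ≤ suffixCard B j := add_suffixCard_le_of_Ico_subset (by omega) (hsub.trans hgap)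

theorem SuffixCardLE.insert_of_Ico_subset (h : SuffixCardLE A B) (hs : s ∉ B) (hs' : s' ∉ A)
    (hgap : Ico s s' ⊆ A) : SuffixCardLE (insert s' A) (insert s B) := by
  refine h.insert_insert hs hs' fun j hsj hjs' => ?_
  have := calc j - s + suffixCard A j ≤ suffixCard A s :=
        add_suffixCard_le_of_Ico_subset hsj.le ((Ico_subset_Ico_right hjs').trans hgap)
    _ ≤ suffixCard B s := h s
    _ < j - s + suffixCard B j := suffixCard_lt_of_notMem hs le_rfl hsj
  omega

theorem SuffixCardLE.not_Ico_subset {n : ℕ} (h : SuffixCardLE A B) (hB : ∀ t ∈ B, t ≤ n)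
    (hs : s ∉ B) (hsn : s ≤ n) : ¬ Ico s (n + 1) ⊆ A := by
  intro hA
  have hB0 : suffixCard B (n + 1) = 0 := suffixCard_eq_zero fun t ht => Nat.lt_succ_of_le (hB t ht)
  have := calc n + 1 - s ≤ n + 1 - s + suffixCard A (n + 1) := Nat.le_add_right _ _
    _ ≤ suffixCard A s := add_suffixCard_le_of_Ico_subset (by omega) hA
    _ ≤ suffixCard B s := h s
    _ < n + 1 - s + suffixCard B (n + 1) := suffixCard_lt_of_notMem hs le_rfl (by omega)
  omega

end SuffixCard

section Monotone

variable {n k k' p s : ℕ} {A B : Finset ℕ}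

theorem naplesSpot_step (hkk : k ≤ k') (hp : 1 ≤ p) (hpn : p ≤ n) (hB : ∀ t ∈ B, t ≤ n)
    (h : SuffixCardLE A B) (hs : naplesSpot n k B p = some s) :
    ∃ s', naplesSpot n k' A p = some s' ∧ SuffixCardLE (insert s' A) (insert s B) := by
  obtain ⟨hsB, hs1, hsn, hpsk, hback, -⟩ := naplesSpot_eq_some hp hpn hs
  cases hs' : naplesSpot n k' A p with
  | none =>
    refine absurd (fun t ht => ?_) (h.not_Ico_subset hB hsB hsn)
    rw [mem_Ico] at ht
    exact naplesSpot_eq_none hs' t (by omega) (by omega) (by omega)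
  | some s' =>
    obtain ⟨hs'A, -, -, -, -, hfwd⟩ := naplesSpot_eq_some hp hpn hs'
    refine ⟨s', rfl, ?_⟩
    rcases le_or_gt s' p with hs'p | hps'
    · refine h.insert_of_Ioc_subset hsB hs'A fun t ht => ?_
      rw [mem_Ioc] at ht
      exact hback (by omega) (mem_Ioc.2 ⟨ht.1, by omega⟩)
    · refine h.insert_of_Ico_subset hsB hs'A fun t ht => ?_
      rw [mem_Ico] at ht
      exact hfwd hps' t (by omega) (by omega) ht.2

theorem naplesPark_isSome_mono (hkk : k ≤ k') (l : List ℕ) (hl : ∀ p ∈ l, 1 ≤ p ∧ p ≤ n)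
    (hB : ∀ t ∈ B, t ≤ n) (h : SuffixCardLE A B) (hpark : (naplesPark n k l B).isSome) :
    (naplesPark n k' l A).isSome := by
  induction l generalizing A B with
  | nil => rfl
  | cons p l ih =>
    obtain ⟨hp, hpn⟩ := hl p List.mem_cons_self
    rw [naplesPark] at hpark
    cases hs : naplesSpot n k B p with
    | none => simp [hs] at hpark
    | some s =>
      rw [hs] at hpark
      obtain ⟨-, -, hsn, -⟩ := naplesSpot_eq_some hp hpn hs
      obtain ⟨s', hs', h'⟩ := naplesSpot_step hkk hp hpn hB h hs
      rw [naplesPark, hs']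
      refine ih (fun q hq => hl q (List.mem_cons_of_mem p hq)) ?_ h' hpark
      simpa [hsn] using hB

end Monotone

theorem mem_prefList {m n p : ℕ} {a : Fin m → Fin n} (hp : p ∈ prefList a) : 1 ≤ p ∧ p ≤ n := by
  obtain ⟨i, rfl⟩ := by simpa [prefList] using hp
  omega

theorem naples_monotone_general (m n k k' : ℕ) (hkk' : k ≤ k') :
    NPFset m n k ⊆ NPFset m n k' := by
  intro a ha
  simp only [NPFset, mem_filter, mem_univ, true_and] at ha ⊢
  exact naplesPark_isSome_mono hkk' (prefList a) (fun p hp => mem_prefList hp) (by simp)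
    (fun _ => le_rfl) ha

theorem naples_monotone (m n k k' : ℕ) (hm : 1 ≤ m) (hmn : m ≤ n)
    (hkk' : k ≤ k') (hk' : k' ≤ n - 1) :
    NPFset m n k ⊆ NPFset m n k' :=
  naples_monotone_general m n k k' hkk'
end

section
/- For 1 ≤ m ≤ n and 0 ≤ k ≤ n-1, the map f ↦ f + k (adding k to every entry) is an injection from the classical (m,n)-parking functions PF(m,n) into the k-left obstructed (m,n)-parking functions LPF(m,n+k;k), and its image is exactly the set of elements of LPF(m,n+k;k) in which no car prefers an obstructed vertex. -/
/-!
Shifting every preference by `k` turns the classical parking process on spots `1, …, n` into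
the parking process on spots `k + 1, …, n + k` with `1, …, k` blocked: at every stage the
occupied set of the obstructed street is `{1, …, k}` together with the shifted occupied set of
the classical one, and each car parks at its classical spot plus `k`. Hence `a ↦ a + k` maps
parking functions exactly onto the obstructed parking functions with no preference `≤ k`.
-/

def shiftOccupied (k : ℕ) (occ : Finset ℕ) : Finset ℕ :=
  Finset.Icc 1 k ∪ occ.image (· + k)

lemma add_mem_shiftOccupied_iff {k s : ℕ} (hs : 1 ≤ s) (occ : Finset ℕ) :
    s + k ∈ shiftOccupied k occ ↔ s ∈ occ := by
  simp only [shiftOccupied, Finset.mem_union, Finset.mem_Icc, Finset.mem_image,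
    Nat.add_right_cancel_iff, exists_eq_right]
  exact or_iff_right (by omega)

lemma insert_add_shiftOccupied (k s : ℕ) (occ : Finset ℕ) :
    insert (s + k) (shiftOccupied k occ) = shiftOccupied k (insert s occ) := by
  rw [shiftOccupied, shiftOccupied, Finset.image_insert, Finset.union_insert]

lemma range'_add_eq_map_add (n k p : ℕ) :
    List.range' (p + k) (n + k + 1 - (p + k)) = (List.range' p (n + 1 - p)).map (· + k) := by
  rw [show (· + k) = (k + ·) from funext fun x => Nat.add_comm x k, List.map_add_range']
  congr 1 <;> omega

lemma forwardSpot_shift {n k p : ℕ} (hp : 1 ≤ p) (occ : Finset ℕ) :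
    forwardSpot (n + k) (shiftOccupied k occ) (p + k) = (forwardSpot n occ p).map (· + k) := by
  rw [forwardSpot, forwardSpot, range'_add_eq_map_add, List.find?_map]
  congr 1
  refine List.find?_congr fun s hs => ?_
  have hs : 1 ≤ s := by have := List.mem_range'_1.mp hs; omega
  simp only [Function.comp_apply, add_mem_shiftOccupied_iff hs]

lemma classicalPark_shift (n k : ℕ) {l : List ℕ} (hl : ∀ p ∈ l, 1 ≤ p) (occ : Finset ℕ) :
    classicalPark (n + k) (l.map (· + k)) (shiftOccupied k occ)
      = (classicalPark n l occ).map (shiftOccupied k) := by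
  induction l generalizing occ with
  | nil => rfl
  | cons p l ih =>
    have hp : 1 ≤ p := hl p List.mem_cons_self
    have hl : ∀ q ∈ l, 1 ≤ q := fun q hq => hl q (List.mem_cons_of_mem p hq)
    rw [List.map_cons, classicalPark, classicalPark, forwardSpot_shift hp]
    cases forwardSpot n occ p with
    | none => rfl
    | some s => simp only [Option.map_some]; rw [insert_add_shiftOccupied, ih hl]

lemma one_le_of_mem_prefList {m n : ℕ} (a : Fin m → Fin n) : ∀ p ∈ prefList a, 1 ≤ p := by
  simp [prefList]

lemma prefList_of_val_eq_add {m n k : ℕ} {a : Fin m → Fin n} {b : Fin m → Fin (n + k)}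
    (h : ∀ c, (b c : ℕ) = a c + k) : prefList b = (prefList a).map (· + k) := by
  simp [prefList, ← List.map_eq_flatMap, List.map_ofFn, Function.comp_def, h, Nat.add_right_comm]

lemma isSome_classicalPark_Icc_of_val_eq_add {m n k : ℕ} {a : Fin m → Fin n}
    {b : Fin m → Fin (n + k)} (h : ∀ c, (b c : ℕ) = a c + k) :
    (classicalPark (n + k) (prefList b) (Finset.Icc 1 k)).isSome
      = (classicalPark n (prefList a) ∅).isSome := by
  have hempty : Finset.Icc 1 k = shiftOccupied k ∅ := by simp [shiftOccupied]
  rw [prefList_of_val_eq_add h, hempty, classicalPark_shift n k (one_le_of_mem_prefList a),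
    Option.isSome_map]

theorem shift_injection (m n k : ℕ) :
    Set.InjOn (fun (a : Fin m → Fin n) (c : Fin m) =>
        (⟨(a c : ℕ) + k, by omega⟩ : Fin (n + k))) ↑(PFset m n) ∧
      (PFset m n).image (fun (a : Fin m → Fin n) (c : Fin m) =>
          (⟨(a c : ℕ) + k, by omega⟩ : Fin (n + k))) =
        (LPFset m n k).filter (fun b => ∀ c, k < (b c : ℕ) + 1) := by
  refine ⟨fun a _ a' _ h => funext fun c => Fin.ext ?_, ?_⟩
  · simpa using congrArg Fin.val (congrFun h c)
  ext b
  simp only [Finset.mem_image, Finset.mem_filter, PFset, LPFset, Finset.mem_univ, true_and]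
  constructor
  · rintro ⟨a, ha, rfl⟩
    exact ⟨(isSome_classicalPark_Icc_of_val_eq_add fun _ => rfl).trans ha, fun c => by simp⟩
  · rintro ⟨hb, hbk⟩
    have hkb : ∀ c, k ≤ (b c : ℕ) := fun c => Nat.le_of_lt_succ (hbk c)
    have hval : ∀ c, (b c : ℕ) = ((b c : ℕ) - k) + k :=
      fun c => (Nat.sub_add_cancel (hkb c)).symm
    refine ⟨fun c => ⟨(b c : ℕ) - k, by have := (b c).isLt; have := hkb c; omega⟩, ?_,
      funext fun c => Fin.ext (hval c).symm⟩
    exact (isSome_classicalPark_Icc_of_val_eq_add hval).symm.trans hb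
end
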